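/- Let M be a reduced cancellative monoid and Q a set of nonzero elements such that ⟨Q⟩ is factorial (freely generated by Q) and Q is linked to M. Then the following are equivalent: (1) every element of M has a unique expression as w + h with w ∈ Ap(M,Q) and h ∈ ⟨Q⟩; (2) for all distinct q,q' ∈ Q, q is coprime with q'; (3) for all w,w' ∈ Ap(M,Q), if w − w' lies in the group generated by Q, then w = w'. -/

import Mathlib

/-- `x ≤_M y` : divisibility in the additive monoid `M`. -/
def MDvd {M : Type*} [AddCancelCommMonoid M] (x y : M) : Prop := ∃ z : M, y = x + z

/-- The Apéry set `Ap(M,Q) = M \ (Q + M)`. -/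
def AperyM {M : Type*} [AddCancelCommMonoid M] (Q : Set M) : Set M :=
  {x | ∀ q ∈ Q, ¬ MDvd q x}

/-- The sum `Σ_{q ∈ Q} λ_q q` encoded by a finitely supported function. -/
def fsum {M : Type*} [AddCancelCommMonoid M] (f : M →₀ ℕ) : M :=
  f.sum fun q n => n • q

/-- `⟨Q⟩` is factorial, freely generated by `Q`. -/
def FreeOn {M : Type*} [AddCancelCommMonoid M] (Q : Set M) : Prop :=
  ∀ f g : M →₀ ℕ, (f.support : Set M) ⊆ Q → (g.support : Set M) ⊆ Q →
    fsum f = fsum g → f = g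

/-- `Q` is linked to `M`. -/
def LinkedM {M : Type*} [AddCancelCommMonoid M] (Q : Set M) : Prop :=
  ∀ x : M, x ≠ 0 → ∃ c : ℕ, ∀ f : M →₀ ℕ, (f.support : Set M) ⊆ Q →
    MDvd (fsum f) x → (f.sum fun _ n => n) ≤ c

/-- `x` is coprime with `y`: `x ≰_M y` and `x ≤_M m + y` implies `x ≤_M m`. -/
def CoprimeWith {M : Type*} [AddCancelCommMonoid M] (x y : M) : Prop :=
  ¬ MDvd x y ∧ ∀ m : M, MDvd x (m + y) → MDvd x m

/-! Greedy division by elements of `Q` terminates because `Q` is linked, so every element is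
`w + h` with `w ∈ Ap(M,Q)` and `h ∈ ⟨Q⟩`. If distinct generators are coprime, a generator `q`
dividing `w + h` with `w` Apéry must occur in `h`, so it can be cancelled from both sides of
`w + h = w' + h'`; this peels `h` down to `0`. Conversely, with unique decompositions, comparing the
two decompositions of `m + q'` when `q ≤_M m + q'` shows, by freeness of `⟨Q⟩`, that `q` occurs in
the `⟨Q⟩`-part of `m`. -/

open Finsupp in
lemma support_add_single_subset {α : Type*} {s : Set α} {f : α →₀ ℕ}
    (hf : (f.support : Set α) ⊆ s) {a : α} (ha : a ∈ s) :
    ((f + single a 1).support : Set α) ⊆ s := by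
  classical
  intro b hb
  rcases Finset.mem_union.1 (support_add hb) with hb | hb
  · exact hf hb
  · rwa [Finset.mem_singleton.1 (support_single_subset hb)]

section AperyDecomposition

variable {M : Type*} [AddCancelCommMonoid M] {Q : Set M}

open Finsupp

lemma fsum_zero : fsum (0 : M →₀ ℕ) = 0 := sum_zero_index

lemma fsum_add (f g : M →₀ ℕ) : fsum (f + g) = fsum f + fsum g :=
  sum_add_index' zero_nsmul add_nsmul

lemma fsum_single_one (q : M) : fsum (single q 1) = q := by
  rw [fsum, sum_single_index (zero_nsmul q), one_nsmul]

lemma mem_closure_iff_exists_fsum {x : M} :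
    x ∈ AddSubmonoid.closure Q ↔ ∃ f : M →₀ ℕ, (f.support : Set M) ⊆ Q ∧ fsum f = x := by
  rw [← Submodule.span_nat_eq_addSubmonoidClosure]
  exact Submodule.mem_span_set

lemma fsum_mem_closure {f : M →₀ ℕ} (hf : (f.support : Set M) ⊆ Q) :
    fsum f ∈ AddSubmonoid.closure Q :=
  mem_closure_iff_exists_fsum.2 ⟨f, hf, rfl⟩

lemma zero_mem_aperyM (hred : ∀ a b : M, a + b = 0 → a = 0) (h0 : (0 : M) ∉ Q) :
    (0 : M) ∈ AperyM Q := by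
  rintro q hq ⟨z, hz⟩
  exact h0 (hred q z hz.symm ▸ hq)

/-- A factorization `fsum f ≤_M x` of maximal degree exists by linkedness, and the cofactor is
Apéry since otherwise `f` could be lengthened. -/
lemma exists_mem_aperyM_add_mem_closure (hred : ∀ a b : M, a + b = 0 → a = 0)
    (h0 : (0 : M) ∉ Q) (hlink : LinkedM Q) (x : M) :
    ∃ w ∈ AperyM Q, ∃ h ∈ AddSubmonoid.closure Q, x = w + h := by
  rcases eq_or_ne x 0 with rfl | hx
  · exact ⟨0, zero_mem_aperyM hred h0, 0, zero_mem _, (add_zero 0).symm⟩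
  obtain ⟨c, hc⟩ := hlink x hx
  classical
  let P : ℕ → Prop := fun n =>
    ∃ f : M →₀ ℕ, (f.support : Set M) ⊆ Q ∧ f.degree = n ∧ MDvd (fsum f) x
  obtain ⟨f, hfQ, hdeg, w, hw⟩ : P (Nat.findGreatest P c) :=
    Nat.findGreatest_spec (Nat.zero_le c) ⟨0, by simp, by simp, x, by rw [fsum_zero, zero_add]⟩
  refine ⟨w, ?_, fsum f, fsum_mem_closure hfQ, hw.trans (add_comm _ _)⟩
  rintro q hq ⟨z, rfl⟩
  have hQ := support_add_single_subset hfQ hq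
  have hdvd : MDvd (fsum (f + single q 1)) x :=
    ⟨z, by rw [hw, fsum_add, fsum_single_one, add_assoc]⟩
  have hle : (f + single q 1).degree ≤ c := hc _ hQ hdvd
  rw [map_add, degree_single] at hle
  exact Nat.findGreatest_is_greatest (P := P) (by omega) hle ⟨_, hQ, by simp [hdeg], hdvd⟩

lemma eq_zero_of_add_mem_aperyM {h : M} (hh : h ∈ AddSubmonoid.closure Q) :
    ∀ x : M, x + h ∈ AperyM Q → h = 0 := by
  induction hh using AddSubmonoid.closure_induction with
  | mem q hq => exact fun x hx => (hx q hq ⟨x, add_comm x q⟩).elim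
  | zero => exact fun _ _ => rfl
  | add a b _ _ iha ihb =>
    intro x hx
    rw [← add_assoc] at hx
    obtain rfl := ihb _ hx
    rw [add_zero] at hx ⊢
    exact iha x hx

lemma mdvd_or_exists_eq_add_of_coprimeWith {q : M} (hq : ∀ q' ∈ Q, q' ≠ q → CoprimeWith q q')
    {h : M} (hh : h ∈ AddSubmonoid.closure Q) :
    ∀ m : M, MDvd q (m + h) → MDvd q m ∨ ∃ h' ∈ AddSubmonoid.closure Q, h = q + h' := by
  induction hh using AddSubmonoid.closure_induction with
  | mem q' hq' =>
    intro m hm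
    rcases eq_or_ne q' q with rfl | hne
    · exact Or.inr ⟨0, zero_mem _, (add_zero q').symm⟩
    · exact Or.inl ((hq q' hq' hne).2 m hm)
  | zero => exact fun m hm => Or.inl (by rwa [add_zero] at hm)
  | add a b ha hb iha ihb =>
    intro m hm
    rw [← add_assoc] at hm
    rcases ihb _ hm with hma | ⟨h', hh', rfl⟩
    · rcases iha m hma with hm | ⟨h', hh', rfl⟩
      · exact Or.inl hm
      · exact Or.inr ⟨h' + b, add_mem hh' hb, add_assoc q h' b⟩
    · exact Or.inr ⟨a + h', add_mem ha hh', add_left_comm a q h'⟩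

/-- Cancelling generators one at a time from `h`, each of which must occur in `h'`. -/
lemma exists_eq_add_of_add_eq_add_of_coprimeWith
    (hcop : ∀ q ∈ Q, ∀ q' ∈ Q, q ≠ q' → CoprimeWith q q') {w : M} (hw : w ∈ AperyM Q)
    {h : M} (hh : h ∈ AddSubmonoid.closure Q) :
    ∀ m h', h' ∈ AddSubmonoid.closure Q → m + h = w + h' →
      ∃ h'' ∈ AddSubmonoid.closure Q, m = w + h'' := by
  induction hh using AddSubmonoid.closure_induction with
  | mem q hq =>
    intro m h' hh' he
    have hdvd : MDvd q (w + h') := ⟨m, by rw [← he, add_comm]⟩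
    rcases mdvd_or_exists_eq_add_of_coprimeWith (fun q' hq' hne => hcop q hq q' hq' hne.symm)
      hh' w hdvd with hqw | ⟨h'', hh'', rfl⟩
    · exact (hw q hq hqw).elim
    · refine ⟨h'', hh'', add_right_cancel (b := q) ?_⟩
      rw [he, add_assoc, add_comm q h'']
  | zero => exact fun m h' hh' he => ⟨h', hh', by rwa [add_zero] at he⟩
  | add a b _ _ iha ihb =>
    intro m h' hh' he
    rw [← add_assoc] at he
    obtain ⟨h₁, hh₁, he₁⟩ := ihb _ h' hh' he
    exact iha m h₁ hh₁ he₁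

lemma apery_eq_of_add_eq_add_of_coprimeWith
    (hcop : ∀ q ∈ Q, ∀ q' ∈ Q, q ≠ q' → CoprimeWith q q') :
    ∀ w ∈ AperyM Q, ∀ w' ∈ AperyM Q,
      (∃ h ∈ AddSubmonoid.closure Q, ∃ h' ∈ AddSubmonoid.closure Q, w + h = w' + h') → w = w' := by
  rintro w hw w' hw' ⟨h, hh, h', hh', he⟩
  obtain ⟨h'', hh'', rfl⟩ := exists_eq_add_of_add_eq_add_of_coprimeWith hcop hw' hh w h' hh' he
  rw [eq_zero_of_add_mem_aperyM hh'' w' hw, add_zero]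

lemma existsUnique_apery_decomposition_of_eq (hred : ∀ a b : M, a + b = 0 → a = 0)
    (h0 : (0 : M) ∉ Q) (hlink : LinkedM Q)
    (huniq : ∀ w ∈ AperyM Q, ∀ w' ∈ AperyM Q,
      (∃ h ∈ AddSubmonoid.closure Q, ∃ h' ∈ AddSubmonoid.closure Q, w + h = w' + h') → w = w')
    (x : M) :
    ∃! p : M × M, p.1 ∈ AperyM Q ∧ p.2 ∈ AddSubmonoid.closure Q ∧ x = p.1 + p.2 := by
  obtain ⟨w, hw, h, hh, rfl⟩ := exists_mem_aperyM_add_mem_closure hred h0 hlink x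
  refine ⟨(w, h), ⟨hw, hh, rfl⟩, ?_⟩
  rintro ⟨w', h'⟩ ⟨hw', hh', he⟩
  obtain rfl : w' = w := huniq w' hw' w hw ⟨h', hh', h, hh, he.symm⟩
  rw [add_left_cancel he]

lemma FreeOn.exists_eq_add_of_add_eq_add (hfree : FreeOn Q) {q q' : M} (hq : q ∈ Q)
    (hq' : q' ∈ Q) (hne : q ≠ q') {h h₂ : M} (hh : h ∈ AddSubmonoid.closure Q)
    (hh₂ : h₂ ∈ AddSubmonoid.closure Q) (he : h + q' = h₂ + q) :
    ∃ h'' ∈ AddSubmonoid.closure Q, h = q + h'' := by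
  classical
  obtain ⟨f, hfQ, rfl⟩ := mem_closure_iff_exists_fsum.1 hh
  obtain ⟨g, hgQ, rfl⟩ := mem_closure_iff_exists_fsum.1 hh₂
  have hfg : f + single q' 1 = g + single q 1 :=
    hfree _ _ (support_add_single_subset hfQ hq') (support_add_single_subset hgQ hq)
      (by rw [fsum_add, fsum_add, fsum_single_one, fsum_single_one, he])
  have hfq : single q 1 ≤ f := by
    have hq_coeff := DFunLike.congr_fun hfg q
    simp only [coe_add, Pi.add_apply, single_eq_same, single_eq_of_ne' hne.symm] at hq_coeff
    exact single_le_iff.2 (by omega)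
  refine ⟨fsum (f - single q 1), fsum_mem_closure ?_, ?_⟩
  · exact fun a ha => hfQ (support_mono tsub_le_self ha)
  · conv_lhs => rw [← add_tsub_cancel_of_le hfq]
    rw [fsum_add, fsum_single_one]

lemma coprimeWith_of_forall_mdvd_add (hred : ∀ a b : M, a + b = 0 → a = 0) {q q' : M}
    (hq : q ≠ 0) (h : ∀ m : M, MDvd q (m + q') → MDvd q m) : CoprimeWith q q' := by
  refine ⟨fun hdvd => ?_, h⟩
  obtain ⟨z, hz⟩ := h 0 (by rwa [zero_add])
  exact hq (hred q z hz.symm)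

lemma coprimeWith_of_existsUnique_apery_decomposition (hred : ∀ a b : M, a + b = 0 → a = 0)
    (h0 : (0 : M) ∉ Q) (hfree : FreeOn Q)
    (hdec : ∀ x : M, ∃! p : M × M,
      p.1 ∈ AperyM Q ∧ p.2 ∈ AddSubmonoid.closure Q ∧ x = p.1 + p.2) :
    ∀ q ∈ Q, ∀ q' ∈ Q, q ≠ q' → CoprimeWith q q' := by
  intro q hq q' hq' hne
  refine coprimeWith_of_forall_mdvd_add hred (fun h => h0 (h ▸ hq)) fun m ⟨z, hz⟩ => ?_
  obtain ⟨⟨w, h⟩, ⟨hw, hh, rfl⟩, -⟩ := hdec m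
  obtain ⟨⟨w₂, h₂⟩, ⟨hw₂, hh₂, rfl⟩, -⟩ := hdec z
  have hsame : (w, h + q') = (w₂, h₂ + q) :=
    (hdec (w + h + q')).unique
      ⟨hw, add_mem hh (AddSubmonoid.subset_closure hq'), add_assoc _ _ _⟩
      ⟨hw₂, add_mem hh₂ (AddSubmonoid.subset_closure hq), by dsimp only; rw [hz]; abel⟩
  obtain ⟨h'', -, rfl⟩ := hfree.exists_eq_add_of_add_eq_add hq hq' hne hh hh₂
    (congrArg Prod.snd hsame)
  exact ⟨w + h'', add_left_comm w q h''⟩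

end AperyDecomposition

/-- with `⟨Q⟩` factorial and `Q` linked to `M`, the following are
equivalent: (1) every element of `M` decomposes uniquely as `w + h`, `w ∈ Ap(M,Q)`,
`h ∈ ⟨Q⟩`; (2) distinct elements of `Q` are coprime; (3) elements of `Ap(M,Q)`
congruent modulo the group generated by `Q` are equal. -/
theorem apery_unique_decomposition_tfae {M : Type*} [AddCancelCommMonoid M]
    (hred : ∀ a b : M, a + b = 0 → a = 0)
    (Q : Set M) (h0 : (0 : M) ∉ Q) (hfree : FreeOn Q) (hlink : LinkedM Q) :
    ((∀ x : M, ∃! p : M × M,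
        p.1 ∈ AperyM Q ∧ p.2 ∈ AddSubmonoid.closure Q ∧ x = p.1 + p.2) ↔
      (∀ q ∈ Q, ∀ q' ∈ Q, q ≠ q' → CoprimeWith q q')) ∧
    ((∀ q ∈ Q, ∀ q' ∈ Q, q ≠ q' → CoprimeWith q q') ↔
      (∀ w ∈ AperyM Q, ∀ w' ∈ AperyM Q,
        (∃ h ∈ AddSubmonoid.closure Q, ∃ h' ∈ AddSubmonoid.closure Q,
          w + h = w' + h') → w = w')) := by
  have h12 := coprimeWith_of_existsUnique_apery_decomposition hred h0 hfree
  have h23 := apery_eq_of_add_eq_add_of_coprimeWith (Q := Q)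
  have h31 := existsUnique_apery_decomposition_of_eq hred h0 hlink
  exact ⟨⟨h12, fun hcop => h31 (h23 hcop)⟩, ⟨h23, fun huniq => h12 (h31 huniq)⟩⟩
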